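/- arXiv:2001.03663 — 4 statements merged into one kernel-verified Lean document; each statement's English description precedes it below -/
import Mathlib

section
/- Let H be an n-colored graph that is color-symmetric with vertex involution s and color-reflection f, and let v₀ be a vertex of H. Then the graph G obtained from two disjoint copies of H by identifying the vertex v₀ in the first copy with the vertex s(v₀) in the second copy is color-symmetric with color-reflection f; an explicit symmetry is the involution sending a vertex v in one copy to s(v) in the other copy. -/
variable {V : Type*} {n : ℕ}

/-- The identification relation on `V ⊕ V` (two copies of `H`) which glues the
vertex `v₀` of the first copy to the vertex `s v₀` of the second copy. -/
def eqvRel (s : V → V) (v₀ : V) : V ⊕ V → V ⊕ V → Prop :=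
  fun x y => x = y ∨ (x = Sum.inl v₀ ∧ y = Sum.inr (s v₀)) ∨
    (x = Sum.inr (s v₀) ∧ y = Sum.inl v₀)

/-- The colored adjacency of the quotient of two disjoint copies of `H`
(colored adjacency `A`) under the identification `inl v₀ ~ inr (s v₀)`:
an edge between `x` and `y` comes from an edge of either copy whose endpoints
are identified with `x` and `y`. -/
def doubleAdj (A : V → V → Fin n → Prop) (s : V → V) (v₀ : V) :
    V ⊕ V → V ⊕ V → Fin n → Prop :=
  fun x y c =>
    (∃ a b, A a b c ∧ eqvRel s v₀ (Sum.inl a) x ∧ eqvRel s v₀ (Sum.inl b) y) ∨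
    (∃ a b, A a b c ∧ eqvRel s v₀ (Sum.inr a) x ∧ eqvRel s v₀ (Sum.inr b) y)

/-- The symmetry of the doubled graph: a vertex `v` of one copy is sent to
`s v` in the other copy. -/
def doubleSym (s : V → V) : V ⊕ V → V ⊕ V :=
  fun x => match x with
    | Sum.inl v => Sum.inr (s v)
    | Sum.inr v => Sum.inl (s v)

/-- if `H` is color-symmetric with vertex involution `s` and
color-reflection `f`, then the graph obtained from two disjoint copies of `H`
by identifying `v₀` in the first copy with `s v₀` in the second copy is
color-symmetric with color-reflection `f`; an explicit symmetry is the
involution sending a vertex `v` of one copy to `s v` in the other copy (it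
respects the identification and sends edges of color `c` to edges of color
`f c`). -/
theorem statement5 (A : V → V → Fin n → Prop) (s : V → V) (f : Fin n → Fin n)
    (v₀ : V)
    (hs : ∀ v, s (s v) = v)
    (hsym : ∀ a b c, A a b c → A (s a) (s b) (f c)) :
    (∀ x, doubleSym s (doubleSym s x) = x) ∧
    (∀ x y, eqvRel s v₀ x y → eqvRel s v₀ (doubleSym s x) (doubleSym s y)) ∧
    (∀ x y c, doubleAdj A s v₀ x y c →
      doubleAdj A s v₀ (doubleSym s x) (doubleSym s y) (f c)) := by
  have hinv : ∀ x, doubleSym s (doubleSym s x) = x := by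
    rintro (v | v) <;> simp [doubleSym, hs]
  have heqv : ∀ x y, eqvRel s v₀ x y → eqvRel s v₀ (doubleSym s x) (doubleSym s y) := by
    rintro x y (rfl | ⟨rfl, rfl⟩ | ⟨rfl, rfl⟩)
    · exact Or.inl rfl
    · exact Or.inr (Or.inr ⟨rfl, by simp [doubleSym, hs]⟩)
    · exact Or.inr (Or.inl ⟨by simp [doubleSym, hs], rfl⟩)
  refine ⟨hinv, heqv, ?_⟩
  rintro x y c (⟨a, b, hab, hax, hby⟩ | ⟨a, b, hab, hax, hby⟩)
  · exact Or.inr ⟨s a, s b, hsym a b c hab, heqv _ _ hax, heqv _ _ hby⟩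
  · exact Or.inl ⟨s a, s b, hsym a b c hab, heqv _ _ hax, heqv _ _ hby⟩
end

section
/- Let G and H be n-colored color-symmetric graphs, with symmetry s on the vertices of G and symmetry s' on the vertices of H, both having the same color-reflection f. Choose v ∈ H and w ∈ G, and form K from three disjoint pieces H×{0}, G×{1}, H×{2} by identifying (v,0) with (w,1) and (s(w),1) with (s'(v),2). Then K is color-symmetric with color-reflection f, with symmetry r given by r(x,0)=(s'(x),2), r(x,1)=(s(x),1), r(x,2)=(s'(x),0). -/
variable {VG VH : Type*} {n : ℕ}

/-- Vertices of the three disjoint pieces `H × {0}`, `G × {1}`, `H × {2}`. -/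
abbrev Triple (VG VH : Type*) := VH ⊕ (VG ⊕ VH)

/-- Copy 0 of `H`. -/
def c0 (x : VH) : Triple VG VH := Sum.inl x
/-- Copy 1, i.e. the copy of `G`. -/
def c1 (x : VG) : Triple VG VH := Sum.inr (Sum.inl x)
/-- Copy 2 of `H`. -/
def c2 (x : VH) : Triple VG VH := Sum.inr (Sum.inr x)

/-- The identification relation: `(v,0) ~ (w,1)` and `(s w,1) ~ (s' v,2)`,
where `s` is the symmetry of `G` and `s'` that of `H`. -/
def tripleRel (s : VG → VG) (s' : VH → VH) (v : VH) (w : VG) :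
    Triple VG VH → Triple VG VH → Prop :=
  fun x y => x = y ∨
    (x = c0 v ∧ y = c1 w) ∨ (x = c1 w ∧ y = c0 v) ∨
    (x = c1 (s w) ∧ y = c2 (s' v)) ∨ (x = c2 (s' v) ∧ y = c1 (s w))

/-- Colored adjacency of the quotient graph `K`: edges come from the edges of
the three pieces (`AH` on both copies of `H`, `AG` on the copy of `G`), with
endpoints taken up to the identifications. -/
def tripleAdj (AG : VG → VG → Fin n → Prop) (AH : VH → VH → Fin n → Prop)
    (s : VG → VG) (s' : VH → VH) (v : VH) (w : VG) :
    Triple VG VH → Triple VG VH → Fin n → Prop :=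
  fun x y c =>
    (∃ a b, AH a b c ∧ tripleRel s s' v w (c0 a) x ∧ tripleRel s s' v w (c0 b) y) ∨
    (∃ a b, AG a b c ∧ tripleRel s s' v w (c1 a) x ∧ tripleRel s s' v w (c1 b) y) ∨
    (∃ a b, AH a b c ∧ tripleRel s s' v w (c2 a) x ∧ tripleRel s s' v w (c2 b) y)

/-- The symmetry `r` of `K`: `r(x,0) = (s' x, 2)`, `r(x,1) = (s x, 1)`,
`r(x,2) = (s' x, 0)`. -/
def tripleSym (s : VG → VG) (s' : VH → VH) : Triple VG VH → Triple VG VH :=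
  fun x => match x with
    | Sum.inl h => c2 (s' h)
    | Sum.inr (Sum.inl g) => c1 (s g)
    | Sum.inr (Sum.inr h) => c0 (s' h)

/-- if `G` and `H` are `n`-colored color-symmetric graphs with
symmetries `s`, `s'` and the same color-reflection `f`, then the graph `K`
obtained from `H × {0}`, `G × {1}`, `H × {2}` by identifying `(v,0) ~ (w,1)`
and `(s w,1) ~ (s' v,2)` is color-symmetric with color-reflection `f` and
symmetry `r` as above: `r` is an involution, respects the identifications, and
maps edges of color `c` to edges of color `f c`. -/
theorem statement6 (AG : VG → VG → Fin n → Prop) (AH : VH → VH → Fin n → Prop)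
    (s : VG → VG) (s' : VH → VH) (f : Fin n → Fin n) (v : VH) (w : VG)
    (hs : ∀ x, s (s x) = x) (hs' : ∀ x, s' (s' x) = x)
    (hsymG : ∀ a b c, AG a b c → AG (s a) (s b) (f c))
    (hsymH : ∀ a b c, AH a b c → AH (s' a) (s' b) (f c)) :
    (∀ x : Triple VG VH, tripleSym s s' (tripleSym s s' x) = x) ∧
    (∀ x y : Triple VG VH, tripleRel s s' v w x y →
      tripleRel s s' v w (tripleSym s s' x) (tripleSym s s' y)) ∧
    (∀ (x y : Triple VG VH) (c : Fin n), tripleAdj AG AH s s' v w x y c →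
      tripleAdj AG AH s s' v w (tripleSym s s' x) (tripleSym s s' y) (f c)) := by
  have hinv : ∀ x : Triple VG VH, tripleSym s s' (tripleSym s s' x) = x := by
    rintro (h | g | h) <;> simp [tripleSym, c0, c1, c2, hs, hs']
  have hrel : ∀ x y : Triple VG VH, tripleRel s s' v w x y →
      tripleRel s s' v w (tripleSym s s' x) (tripleSym s s' y) := by
    rintro x y (rfl | ⟨rfl, rfl⟩ | ⟨rfl, rfl⟩ | ⟨rfl, rfl⟩ | ⟨rfl, rfl⟩)
    · exact Or.inl rfl
    · exact Or.inr (Or.inr (Or.inr (Or.inr ⟨rfl, rfl⟩)))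
    · exact Or.inr (Or.inr (Or.inr (Or.inl ⟨rfl, rfl⟩)))
    · simp only [tripleSym, c1, c2, hs, hs']
      exact Or.inr (Or.inr (Or.inl ⟨rfl, rfl⟩))
    · simp only [tripleSym, c1, c2, hs, hs']
      exact Or.inr (Or.inl ⟨rfl, rfl⟩)
  refine ⟨hinv, hrel, ?_⟩
  rintro x y c (⟨a, b, hab, hax, hby⟩ | ⟨a, b, hab, hax, hby⟩ | ⟨a, b, hab, hax, hby⟩)
  · exact Or.inr (Or.inr ⟨s' a, s' b, hsymH a b c hab, hrel _ _ hax, hrel _ _ hby⟩)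
  · exact Or.inr (Or.inl ⟨s a, s b, hsymG a b c hab, hrel _ _ hax, hrel _ _ hby⟩)
  · exact Or.inl ⟨s' a, s' b, hsymH a b c hab, hrel _ _ hax, hrel _ _ hby⟩
end

section
/- For every integer m ≥ 8, the graph G_m, constructed from 4m+2 copies L¹,...,L^{4m+2} of the linear graph L_{2m} via the identifications I1–I6, is a connected tree. -/
/-- A vertex of the disjoint union of the `4m+2` copies of `L_{2m}`:
`(k, i)` is the vertex `v_i` of the copy `L^k`, with `1 ≤ k ≤ 4m+2` and
`0 ≤ i ≤ 2m`. -/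
def VOk (m : ℕ) (p : ℕ × ℕ) : Prop :=
  1 ≤ p.1 ∧ p.1 ≤ 4 * m + 2 ∧ p.2 ≤ 2 * m

/-- Vertices of the disjoint union of the copies `L¹, …, L^{4m+2}` of `L_{2m}`. -/
def Vm (m : ℕ) := { p : ℕ × ℕ // VOk m p }

/-- The identifications I1–I6 defining `G_m`. -/
def glueRel (m : ℕ) : Vm m → Vm m → Prop := fun x y =>
  (∃ t, 1 ≤ t ∧ t + 1 ≤ m ∧ x.1 = (t, t - 1) ∧ y.1 = (t + 1, t + 2)) ∨
  (∃ t, m + 1 ≤ t ∧ t + 1 ≤ 2 * m ∧ x.1 = (t, t - 2) ∧ y.1 = (t + 1, t + 1)) ∨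
  (x.1 = (1, 2) ∧ y.1 = (2 * m, 2 * m - 2)) ∨
  (∃ t, 1 ≤ t ∧ t ≤ m ∧ x.1 = (t, t) ∧ y.1 = (2 * m + t, 2 * m - 5)) ∨
  (∃ t, m + 1 ≤ t ∧ t ≤ 2 * m ∧ x.1 = (t, t - 1) ∧ y.1 = (2 * m + t, 5)) ∨
  (x.1 = (1, 0) ∧ y.1 = (4 * m + 1, 6)) ∨
  (x.1 = (4 * m + 2, 2 * m - 6) ∧ y.1 = (2 * m, 2 * m))

/-- The vertex set of `G_m`: the quotient of the disjoint union of the copies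
of `L_{2m}` by the identifications I1–I6. -/
def Qm (m : ℕ) := Quot (glueRel m)

/-- Projection to the quotient. -/
def mkQ (m : ℕ) : Vm m → Qm m := Quot.mk (glueRel m)

/-- `x` and `y` are the endpoints of an edge of one of the copies of `L_{2m}`
(`y` is the upper endpoint). -/
def EdgeV (m : ℕ) (x y : Vm m) : Prop :=
  x.1.1 = y.1.1 ∧ x.1.2 + 1 = y.1.2

/-- The graph `G_m`. -/
def Gm (m : ℕ) : SimpleGraph (Qm m) where
  Adj q q' := q ≠ q' ∧
    ∃ x y : Vm m, (EdgeV m x y ∨ EdgeV m y x) ∧ q = mkQ m x ∧ q' = mkQ m y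
  symm := by
    constructor
    rintro q q' ⟨h, x, y, he, hx, hy⟩
    exact ⟨h.symm, y, x, by tauto, hy, hx⟩
  loopless := by constructor; rintro q ⟨h, -⟩; exact h rfl

/-!
Every copy `L^k` has an apex, and the identifications I1–I6 glue the apex of each `L^k` with
`k ≥ 2` to a vertex `attach k` of another copy. The function
`v_i ∈ L^k ↦ |i - apex k| + apexHeight k` respects the identifications, so it is a height
function on `G_m` whose only zero is the root `v₁ ∈ L¹`. Adjacent vertices differ in height by
one, and every class of positive height contains exactly one vertex that is not an apex, through
which it has exactly one lower neighbour. A graph with such a height function is connected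
(descend to the root) and acyclic (look at a highest vertex of a cycle).
-/

namespace SimpleGraph

variable {V : Type*} {G : SimpleGraph V}

theorem isAcyclic_of_height (h : V → ℕ)
    (hadj : ∀ ⦃u v⦄, G.Adj u v → h u = h v + 1 ∨ h v = h u + 1)
    (hlower : ∀ ⦃u v w⦄, G.Adj u v → G.Adj u w → h v + 1 = h u → h w + 1 = h u → v = w) :
    G.IsAcyclic := by
  classical
  intro v c hc
  obtain ⟨u, hu, hmax⟩ := c.support.toFinset.exists_max_image h ⟨v, by simp⟩
  rw [List.mem_toFinset] at hu
  have hc' := hc.rotate hu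
  have below : ∀ w ∈ (c.rotate u hu).support, G.Adj u w → h w + 1 = h u := fun w hw huw => by
    have := hmax w (List.mem_toFinset.2 ((c.mem_support_rotate_iff u hu).1 hw))
    rcases hadj huw with _ | _ <;> omega
  -- At a highest vertex of the cycle both cycle-neighbours lie one level lower, so coincide.
  exact hc'.snd_ne_penultimate <|
    hlower (Walk.adj_snd hc'.not_nil) (Walk.adj_penultimate hc'.not_nil).symm
      (below _ (Walk.getVert_mem_support ..) (Walk.adj_snd hc'.not_nil))
      (below _ (Walk.getVert_mem_support ..) (Walk.adj_penultimate hc'.not_nil).symm)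

theorem connected_of_height (h : V → ℕ) (r : V) (hzero : ∀ v, h v = 0 → v = r)
    (hdesc : ∀ v, h v ≠ 0 → ∃ w, G.Adj v w ∧ h w < h v) : G.Connected := by
  refine (connected_iff_exists_forall_reachable G).2 ⟨r, fun v => ?_⟩
  induction hv : h v using Nat.strong_induction_on generalizing v with
  | _ n ih =>
    rcases eq_or_ne n 0 with rfl | hn
    · rw [hzero v hv]
    · obtain ⟨w, hvw, hw⟩ := hdesc v (hv ▸ hn)
      exact (ih _ (hv ▸ hw) w rfl).trans hvw.reachable.symm

end SimpleGraph

namespace Gm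

/-- The index of the vertex of `L^k` closest to the root `v₁ ∈ L¹`. -/
def apex (m k : ℕ) : ℕ :=
  if k = 1 then 1 else if k ≤ m then k + 1 else if k ≤ 2 * m then k - 2
  else if k ≤ 3 * m then 2 * m - 5 else if k ≤ 4 * m then 5
  else if k = 4 * m + 1 then 6 else 2 * m - 6

/-- The distance of the apex of `L^k` from the root. -/
def apexHeight (m k : ℕ) : ℕ :=
  if k = 1 then 0 else if k ≤ m then 2 * k - 3 else if k ≤ 2 * m then 1 + 2 * (2 * m - k)
  else if k ≤ 3 * m then 2 * (k - 2 * m) - 2 else if k ≤ 4 * m then 2 + 2 * (4 * m - k)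
  else if k = 4 * m + 1 then 1 else 3

/-- The vertex that I1–I6 identify with the apex of `L^k`, lying in a copy nearer the root
(for `k = 1`, the apex itself). -/
def attach (m k : ℕ) : ℕ × ℕ :=
  if k = 1 then (1, 1) else if k ≤ m then (k - 1, k - 2) else if k < 2 * m then (k + 1, k + 1)
  else if k = 2 * m then (1, 2) else if k ≤ 3 * m then (k - 2 * m, k - 2 * m)
  else if k ≤ 4 * m then (k - 2 * m, k - 2 * m - 1)
  else if k = 4 * m + 1 then (1, 0) else (2 * m, 2 * m)

def height (m : ℕ) (p : ℕ × ℕ) : ℕ :=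
  Nat.dist p.2 (apex m p.1) + apexHeight m p.1

/-- Collapses each class of the identification to its unique non-apex vertex, if it has one. -/
def partner (m : ℕ) (p : ℕ × ℕ) : ℕ × ℕ :=
  if p.2 = apex m p.1 then attach m p.1 else p

variable {m k : ℕ}

-- Stated without truncated subtraction, so that `omega` can use it cheaply.
lemma copy_spec (hm : 8 ≤ m) (hk : 1 ≤ k) :
    (k = 1 ∧ apex m k = 1 ∧ apexHeight m k = 0 ∧ (attach m k).1 = 1 ∧ (attach m k).2 = 1) ∨
    (2 ≤ k ∧ k ≤ m ∧ apex m k = k + 1 ∧ apexHeight m k + 3 = 2 * k ∧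
      (attach m k).1 + 1 = k ∧ (attach m k).2 + 2 = k) ∨
    (m < k ∧ k < 2 * m ∧ apex m k + 2 = k ∧ apexHeight m k + 2 * k = 4 * m + 1 ∧
      (attach m k).1 = k + 1 ∧ (attach m k).2 = k + 1) ∨
    (k = 2 * m ∧ apex m k + 2 = k ∧ apexHeight m k = 1 ∧
      (attach m k).1 = 1 ∧ (attach m k).2 = 2) ∨
    (2 * m < k ∧ k ≤ 3 * m ∧ apex m k + 5 = 2 * m ∧ apexHeight m k + 4 * m + 2 = 2 * k ∧
      (attach m k).1 + 2 * m = k ∧ (attach m k).2 + 2 * m = k) ∨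
    (3 * m < k ∧ k ≤ 4 * m ∧ apex m k = 5 ∧ apexHeight m k + 2 * k = 8 * m + 2 ∧
      (attach m k).1 + 2 * m = k ∧ (attach m k).2 + 2 * m + 1 = k) ∨
    (k = 4 * m + 1 ∧ apex m k = 6 ∧ apexHeight m k = 1 ∧
      (attach m k).1 = 1 ∧ (attach m k).2 = 0) ∨
    (4 * m + 1 < k ∧ apex m k + 6 = 2 * m ∧ apexHeight m k = 3 ∧
      (attach m k).1 = 2 * m ∧ (attach m k).2 = 2 * m) := by
  unfold apex apexHeight attach
  split_ifs <;> simp only [and_true, true_and] <;>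
  first
  | exact Or.inl (by omega)
  | exact Or.inr <| Or.inl (by omega)
  | exact Or.inr <| Or.inr <| Or.inl (by omega)
  | exact Or.inr <| Or.inr <| Or.inr <| Or.inl (by omega)
  | exact Or.inr <| Or.inr <| Or.inr <| Or.inr <| Or.inl (by omega)
  | exact Or.inr <| Or.inr <| Or.inr <| Or.inr <| Or.inr <| Or.inl (by omega)
  | exact Or.inr <| Or.inr <| Or.inr <| Or.inr <| Or.inr <| Or.inr <| Or.inl (by omega)
  | exact Or.inr <| Or.inr <| Or.inr <| Or.inr <| Or.inr <| Or.inr <| Or.inr (by omega)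

lemma apex_le (hm : 8 ≤ m) (hk : 1 ≤ k) : apex m k ≤ 2 * m := by
  rcases copy_spec hm hk with h | h | h | h | h | h | h | h <;> omega

lemma height_attach (hm : 8 ≤ m) (hk : 1 ≤ k) :
    height m (attach m k) = apexHeight m k := by
  have ha : 1 ≤ (attach m k).1 := by
    rcases copy_spec hm hk with h | h | h | h | h | h | h | h <;> omega
  unfold height Nat.dist
  rcases copy_spec hm hk with h | h | h | h | h | h | h | h <;>
  rcases copy_spec hm ha with h' | h' | h' | h' | h' | h' | h' | h' <;>
  omega

lemma attach_ne_apex (hm : 8 ≤ m) (hk : 1 ≤ k) (hk1 : k ≠ 1) (hk2 : k ≠ 2 * m + 1) :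
    (attach m k).2 ≠ apex m (attach m k).1 := by
  have ha : 1 ≤ (attach m k).1 := by
    rcases copy_spec hm hk with h | h | h | h | h | h | h | h <;> omega
  rcases copy_spec hm hk with h | h | h | h | h | h | h | h <;>
  rcases copy_spec hm ha with h' | h' | h' | h' | h' | h' | h' | h' <;>
  omega

lemma apex_attach_of_glueRel (hm : 8 ≤ m) {x y : Vm m} (h : glueRel m x y) :
    (y.1.2 = apex m y.1.1 ∧ x.1 = attach m y.1.1) ∨
      (x.1.2 = apex m x.1.1 ∧ y.1 = attach m x.1.1) := by
  have hx1 := x.2.1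
  have hy1 := y.2.1
  simp only [Prod.ext_iff]
  rcases h with ⟨t, ht, ht', hx, hy⟩ | ⟨t, ht, ht', hx, hy⟩ | ⟨hx, hy⟩ | ⟨t, ht, ht', hx, hy⟩ |
    ⟨t, ht, ht', hx, hy⟩ | ⟨hx, hy⟩ | ⟨hx, hy⟩ <;>
  simp only [Prod.ext_iff] at hx hy <;>
  first
  | (left; rcases copy_spec hm hy1 with h | h | h | h | h | h | h | h <;> omega)
  | (right; rcases copy_spec hm hx1 with h | h | h | h | h | h | h | h <;> omega)

lemma exists_glueRel_attach (hm : 8 ≤ m) (x : Vm m) (hx : x.1.2 = apex m x.1.1)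
    (hx1 : x.1.1 ≠ 1) : ∃ y : Vm m, y.1 = attach m x.1.1 ∧ (glueRel m y x ∨ glueRel m x y) := by
  obtain ⟨hk, hk', -⟩ := x.2
  have hok : VOk m (attach m x.1.1) := by
    refine ⟨?_, ?_, ?_⟩ <;> rcases copy_spec hm hk with h | h | h | h | h | h | h | h <;> omega
  refine ⟨⟨attach m x.1.1, hok⟩, rfl, ?_⟩
  unfold glueRel
  dsimp only
  simp only [Prod.ext_iff]
  rcases copy_spec hm hk with h | h | h | h | h | h | h | h
  · exact absurd h.1 hx1
  · exact .inl <| .inl ⟨x.1.1 - 1, by and_intros <;> omega⟩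
  · exact .inr <| .inr <| .inl ⟨x.1.1, by and_intros <;> omega⟩
  · exact .inl <| .inr <| .inr <| .inl (by and_intros <;> omega)
  · exact .inl <| .inr <| .inr <| .inr <| .inl ⟨x.1.1 - 2 * m, by and_intros <;> omega⟩
  · exact .inl <| .inr <| .inr <| .inr <| .inr <| .inl ⟨x.1.1 - 2 * m, by and_intros <;> omega⟩
  · exact .inl <| .inr <| .inr <| .inr <| .inr <| .inr <| .inl (by and_intros <;> omega)
  · exact .inr <| .inr <| .inr <| .inr <| .inr <| .inr <| .inr (by and_intros <;> omega)

lemma partner_of_ne_apex {p : ℕ × ℕ} (h : p.2 ≠ apex m p.1) : partner m p = p := if_neg h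

lemma partner_attach (hm : 8 ≤ m) (hk : 1 ≤ k) : partner m (attach m k) = attach m k := by
  by_cases hk' : k = 1 ∨ k = 2 * m + 1
  · have : attach m k = (1, 1) := by
      simp only [Prod.ext_iff]
      rcases copy_spec hm hk with h | h | h | h | h | h | h | h <;> omega
    rw [this, partner, if_pos] <;> simp [apex, attach]
  · exact partner_of_ne_apex (attach_ne_apex hm hk (by omega) (by omega))

lemma partner_eq_of_glueRel (hm : 8 ≤ m) {x y : Vm m} (h : glueRel m x y) :
    partner m x.1 = partner m y.1 := by
  have key : ∀ {a b : Vm m}, b.1.2 = apex m b.1.1 → a.1 = attach m b.1.1 →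
      partner m a.1 = partner m b.1 := fun {_ b} hb ha => by
    rw [ha, partner_attach hm b.2.1, partner, if_pos hb]
  rcases apex_attach_of_glueRel hm h with ⟨hy, hx⟩ | ⟨hx, hy⟩
  exacts [key hy hx, (key hx hy).symm]

lemma height_eq_of_glueRel (hm : 8 ≤ m) {x y : Vm m} (h : glueRel m x y) :
    height m x.1 = height m y.1 := by
  have key : ∀ {a b : Vm m}, b.1.2 = apex m b.1.1 → a.1 = attach m b.1.1 →
      height m a.1 = height m b.1 := fun {_ b} hb ha => by
    rw [ha, height_attach hm b.2.1, height, hb, Nat.dist_self, zero_add]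
  rcases apex_attach_of_glueRel hm h with ⟨hy, hx⟩ | ⟨hx, hy⟩
  exacts [key hy hx, (key hx hy).symm]

lemma eq_of_height_eq_zero (hm : 8 ≤ m) {p : ℕ × ℕ} (hp : VOk m p) (h : height m p = 0) :
    p = (1, 1) ∨ p = (2 * m + 1, 2 * m - 5) := by
  unfold height Nat.dist at h
  simp only [Prod.ext_iff]
  rcases copy_spec hm hp.1 with h | h | h | h | h | h | h | h <;> omega

lemma edgeV_or_edgeV_iff {x y : Vm m} :
    EdgeV m x y ∨ EdgeV m y x ↔ y.1.1 = x.1.1 ∧ (y.1.2 = x.1.2 + 1 ∨ y.1.2 + 1 = x.1.2) := by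
  unfold EdgeV
  constructor
  · rintro (⟨hk, hi⟩ | ⟨hk, hi⟩) <;> omega
  · rintro ⟨hk, hi | hi⟩ <;> [left; right] <;> omega

lemma height_eq_of_fst_eq {x y : Vm m} (h : y.1.1 = x.1.1) :
    height m y.1 = Nat.dist y.1.2 (apex m x.1.1) + apexHeight m x.1.1 := by
  rw [height, h]

lemma height_edge {x y : Vm m} (h : EdgeV m x y ∨ EdgeV m y x) :
    height m x.1 = height m y.1 + 1 ∨ height m y.1 = height m x.1 + 1 := by
  rw [edgeV_or_edgeV_iff] at h
  rw [height_eq_of_fst_eq h.1, height]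
  unfold Nat.dist
  omega

lemma ne_apex_of_edge {x y : Vm m} (h : EdgeV m x y ∨ EdgeV m y x)
    (hxy : height m y.1 + 1 = height m x.1) : x.1.2 ≠ apex m x.1.1 := by
  rw [edgeV_or_edgeV_iff] at h
  rw [height_eq_of_fst_eq h.1, height] at hxy
  unfold Nat.dist at hxy
  omega

lemma eq_of_edge_of_height {x y z : Vm m} (hy : EdgeV m x y ∨ EdgeV m y x)
    (hz : EdgeV m x z ∨ EdgeV m z x) (hxy : height m y.1 + 1 = height m x.1)
    (hxz : height m z.1 + 1 = height m x.1) : y = z := by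
  rw [edgeV_or_edgeV_iff] at hy hz
  rw [height_eq_of_fst_eq hy.1, height] at hxy
  rw [height_eq_of_fst_eq hz.1, height] at hxz
  unfold Nat.dist at hxy hxz
  exact Subtype.ext (Prod.ext (by omega) (by omega))

lemma exists_edge_height_lt (hm : 8 ≤ m) (x : Vm m) (hx : x.1.2 ≠ apex m x.1.1) :
    ∃ y : Vm m, (EdgeV m x y ∨ EdgeV m y x) ∧ height m y.1 + 1 = height m x.1 := by
  have ha := apex_le hm x.2.1
  have hi := x.2.2.2
  obtain ⟨j, hj, hji, hd⟩ : ∃ j ≤ 2 * m, (j = x.1.2 + 1 ∨ j + 1 = x.1.2) ∧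
      Nat.dist j (apex m x.1.1) + 1 = Nat.dist x.1.2 (apex m x.1.1) := by
    unfold Nat.dist
    rcases lt_or_gt_of_ne hx with h | h
    exacts [⟨x.1.2 + 1, by omega, by omega, by omega⟩, ⟨x.1.2 - 1, by omega, by omega, by omega⟩]
  refine ⟨⟨(x.1.1, j), x.2.1, x.2.2.1, hj⟩, edgeV_or_edgeV_iff.2 ⟨rfl, hji⟩, ?_⟩
  show Nat.dist j (apex m x.1.1) + apexHeight m x.1.1 + 1 = height m x.1
  rw [height, ← hd]
  omega

def heightQ (hm : 8 ≤ m) : Qm m → ℕ :=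
  Quot.lift (fun x => height m x.1) fun _ _ => height_eq_of_glueRel hm

lemma heightQ_mk (hm : 8 ≤ m) (x : Vm m) : heightQ hm (mkQ m x) = height m x.1 := rfl

def root (hm : 8 ≤ m) : Qm m :=
  mkQ m ⟨(1, 1), le_rfl, by omega, by omega⟩

lemma eq_of_mkQ_eq_of_ne_apex (hm : 8 ≤ m) {x y : Vm m} (h : mkQ m x = mkQ m y)
    (hx : x.1.2 ≠ apex m x.1.1) (hy : y.1.2 ≠ apex m y.1.1) : x = y := by
  have : partner m x.1 = partner m y.1 :=
    congrArg (Quot.lift (fun z : Vm m => partner m z.1) fun _ _ => partner_eq_of_glueRel hm) h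
  exact Subtype.ext (by rwa [partner_of_ne_apex hx, partner_of_ne_apex hy] at this)

lemma exists_mkQ_eq_ne_apex (hm : 8 ≤ m) (x : Vm m) (h : height m x.1 ≠ 0) :
    ∃ y : Vm m, mkQ m y = mkQ m x ∧ y.1.2 ≠ apex m y.1.1 := by
  by_cases hx : x.1.2 = apex m x.1.1
  · have hx1 : x.1.1 ≠ 1 ∧ x.1.1 ≠ 2 * m + 1 := by
      rw [height, hx, Nat.dist_self, zero_add] at h
      rcases copy_spec hm x.2.1 with h' | h' | h' | h' | h' | h' | h' | h' <;> omega
    obtain ⟨y, hy, hglue⟩ := exists_glueRel_attach hm x hx hx1.1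
    refine ⟨y, ?_, hy ▸ attach_ne_apex hm x.2.1 hx1.1 hx1.2⟩
    rcases hglue with hglue | hglue
    exacts [Quot.sound hglue, (Quot.sound hglue).symm]
  · exact ⟨x, rfl, hx⟩

lemma heightQ_eq_zero (hm : 8 ≤ m) {q : Qm m} (h : heightQ hm q = 0) : q = root hm := by
  obtain ⟨x, rfl⟩ := Quot.exists_rep q
  rcases eq_of_height_eq_zero hm x.2 h with hx | hx
  · exact congrArg (mkQ m) (Subtype.ext hx)
  · exact (Quot.sound (.inr <| .inr <| .inr <| .inl ⟨1, le_rfl, by omega, rfl, hx⟩)).symm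

lemma adj_heightQ (hm : 8 ≤ m) {q q' : Qm m} (h : (Gm m).Adj q q') :
    heightQ hm q = heightQ hm q' + 1 ∨ heightQ hm q' = heightQ hm q + 1 := by
  obtain ⟨-, x, y, hxy, rfl, rfl⟩ := h
  exact height_edge hxy

lemma eq_of_adj_of_heightQ (hm : 8 ≤ m) {q q₁ q₂ : Qm m} (h₁ : (Gm m).Adj q q₁)
    (h₂ : (Gm m).Adj q q₂) (e₁ : heightQ hm q₁ + 1 = heightQ hm q)
    (e₂ : heightQ hm q₂ + 1 = heightQ hm q) : q₁ = q₂ := by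
  obtain ⟨-, x, y, hxy, rfl, rfl⟩ := h₁
  obtain ⟨-, x', z, hxz, hxx', rfl⟩ := h₂
  rw [hxx'] at e₂
  obtain rfl := eq_of_mkQ_eq_of_ne_apex hm hxx' (ne_apex_of_edge hxy e₁) (ne_apex_of_edge hxz e₂)
  rw [eq_of_edge_of_height hxy hxz e₁ e₂]

lemma exists_adj_heightQ_lt (hm : 8 ≤ m) (q : Qm m) (h : heightQ hm q ≠ 0) :
    ∃ q', (Gm m).Adj q q' ∧ heightQ hm q' < heightQ hm q := by
  obtain ⟨x, rfl⟩ : ∃ x, mkQ m x = q := Quot.exists_rep q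
  obtain ⟨y, hyx, hy⟩ := exists_mkQ_eq_ne_apex hm x h
  obtain ⟨z, hyz, hz⟩ := exists_edge_height_lt hm y hy
  have hlt : heightQ hm (mkQ m z) < heightQ hm (mkQ m y) := by
    rw [heightQ_mk, heightQ_mk]; omega
  rw [← hyx]
  exact ⟨mkQ m z, ⟨fun e => hlt.ne' (congrArg _ e), y, z, hyz, rfl, rfl⟩, hlt⟩

end Gm

/-- for every `m ≥ 8`, the graph `G_m` is a connected tree. -/
theorem statement9 (m : ℕ) (hm : 8 ≤ m) : (Gm m).IsTree :=
  ⟨SimpleGraph.connected_of_height (Gm.heightQ hm) (Gm.root hm)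
      (fun _ => Gm.heightQ_eq_zero hm) (Gm.exists_adj_heightQ_lt hm),
    SimpleGraph.isAcyclic_of_height (Gm.heightQ hm)
      (fun _ _ => Gm.adj_heightQ hm) (fun _ _ _ => Gm.eq_of_adj_of_heightQ hm)⟩
end

section
/- For every integer m ≥ 8, each identification in the construction of G_m glues a vertex v_i of one copy of L_{2m} to a vertex v_j of another copy with |i − j| ≥ 3. Consequently, the edge coloring inherited from the copies of L_{2m} makes G_m a properly 2m-edge-colored graph (no two edges at a common vertex have the same color), and moreover no vertex of G_m is incident to two edges of consecutive colors coming from different copies. -/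
/-- `x` is incident to an edge of color `c` in its copy of `L_{2m}`:
the edge of color `c` of a copy joins the vertices `v_{c-1}` and `v_c`. -/
def Inc (m : ℕ) (x : Vm m) (c : ℕ) : Prop :=
  (c = x.1.2 ∧ 1 ≤ c) ∨ (c = x.1.2 + 1 ∧ c ≤ 2 * m)

lemma index_far_of_glueRel {m : ℕ} (hm : 8 ≤ m) {x y : Vm m} (h : glueRel m x y) :
    x.1.2 + 3 ≤ y.1.2 ∨ y.1.2 + 3 ≤ x.1.2 := by
  rcases h with ⟨t, ht, ht', hx, hy⟩ | ⟨t, ht, ht', hx, hy⟩ | ⟨hx, hy⟩ |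
    ⟨t, ht, ht', hx, hy⟩ | ⟨t, ht, ht', hx, hy⟩ | ⟨hx, hy⟩ | ⟨hx, hy⟩ <;>
  · simp only [Prod.ext_iff] at hx hy
    omega

def glueRep (m : ℕ) (p : ℕ × ℕ) : ℕ × ℕ :=
  if 2 ≤ p.1 ∧ p.1 ≤ m ∧ p.2 = p.1 + 1 then (p.1 - 1, p.1 - 2)
  else if m + 2 ≤ p.1 ∧ p.1 ≤ 2 * m ∧ p.2 = p.1 then (p.1 - 1, p.1 - 3)
  else if p.1 = 2 * m ∧ p.2 = 2 * m - 2 then (1, 2)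
  else if 2 * m + 1 ≤ p.1 ∧ p.1 ≤ 3 * m ∧ p.2 = 2 * m - 5 then (p.1 - 2 * m, p.1 - 2 * m)
  else if 3 * m + 1 ≤ p.1 ∧ p.1 ≤ 4 * m ∧ p.2 = 5 then (p.1 - 2 * m, p.1 - 2 * m - 1)
  else if p.1 = 4 * m + 1 ∧ p.2 = 6 then (1, 0)
  else if p.1 = 4 * m + 2 ∧ p.2 = 2 * m - 6 then (2 * m - 1, 2 * m - 3)
  else p

lemma glueRep_cases (m : ℕ) (p : ℕ × ℕ) :
    (2 ≤ p.1 ∧ p.1 ≤ m ∧ p.2 = p.1 + 1 ∧ glueRep m p = (p.1 - 1, p.1 - 2)) ∨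
    (m + 2 ≤ p.1 ∧ p.1 ≤ 2 * m ∧ p.2 = p.1 ∧ glueRep m p = (p.1 - 1, p.1 - 3)) ∨
    (p.1 = 2 * m ∧ p.2 = 2 * m - 2 ∧ glueRep m p = (1, 2)) ∨
    (2 * m + 1 ≤ p.1 ∧ p.1 ≤ 3 * m ∧ p.2 = 2 * m - 5 ∧
      glueRep m p = (p.1 - 2 * m, p.1 - 2 * m)) ∨
    (3 * m + 1 ≤ p.1 ∧ p.1 ≤ 4 * m ∧ p.2 = 5 ∧
      glueRep m p = (p.1 - 2 * m, p.1 - 2 * m - 1)) ∨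
    (p.1 = 4 * m + 1 ∧ p.2 = 6 ∧ glueRep m p = (1, 0)) ∨
    (p.1 = 4 * m + 2 ∧ p.2 = 2 * m - 6 ∧ glueRep m p = (2 * m - 1, 2 * m - 3)) ∨
    glueRep m p = p := by
  unfold glueRep
  split_ifs <;> simp only [and_true, *, or_true, true_or]

lemma eq_or_index_far_of_glueRep_eq {m : ℕ} (hm : 8 ≤ m) {p q : ℕ × ℕ}
    (h : glueRep m p = glueRep m q) : p = q ∨ p.2 + 3 ≤ q.2 ∨ q.2 + 3 ≤ p.2 := by
  have hp := glueRep_cases m p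
  have hq := glueRep_cases m q
  generalize glueRep m p = r at *
  generalize glueRep m q = s at *
  simp only [Prod.ext_iff] at h hp hq ⊢
  omega

lemma glueRep_eq_of_glueRel {m : ℕ} (hm : 8 ≤ m) {x y : Vm m} (h : glueRel m x y) :
    glueRep m x.1 = glueRep m y.1 := by
  rcases h with ⟨t, ht, ht', hx, hy⟩ | ⟨t, ht, ht', hx, hy⟩ | ⟨hx, hy⟩ |
    ⟨t, ht, ht', hx, hy⟩ | ⟨t, ht, ht', hx, hy⟩ | ⟨hx, hy⟩ | ⟨hx, hy⟩ <;>
  · rw [hx, hy]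
    simp (disch := omega) only [glueRep, and_true, if_true, if_pos, if_neg, Prod.mk.injEq] <;>
      omega

lemma glueRep_eq_of_mkQ_eq {m : ℕ} (hm : 8 ≤ m) {x y : Vm m} (h : mkQ m x = mkQ m y) :
    glueRep m x.1 = glueRep m y.1 :=
  congrArg (Quot.lift (fun z : Vm m => glueRep m z.1) fun _ _ => glueRep_eq_of_glueRel hm) h

lemma copy_eq_of_mkQ_eq_of_inc {m c d : ℕ} (hm : 8 ≤ m) {x y : Vm m}
    (h : mkQ m x = mkQ m y) (hx : Inc m x c) (hy : Inc m y d) (hdc : d ≤ c + 1)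
    (hcd : c ≤ d + 1) : x.1.1 = y.1.1 := by
  rcases eq_or_index_far_of_glueRep_eq hm (glueRep_eq_of_mkQ_eq hm h) with hxy | hfar
  · rw [hxy]
  · unfold Inc at hx hy
    omega

/-- for `m ≥ 8`, (a) each identification I1–I6 glues a vertex
`v_i` of one copy to a vertex `v_j` of another copy with `|i − j| ≥ 3`;
(b) consequently the coloring inherited from the copies of `L_{2m}` is proper:
at any vertex of `G_m`, two incident edges with the same color coincide (in
particular lie in the same copy); and (c) no vertex of `G_m` is incident to
two edges of consecutive colors coming from different copies. -/
theorem statement10 (m : ℕ) (hm : 8 ≤ m) :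
    (∀ x y : Vm m, glueRel m x y →
      x.1.2 + 3 ≤ y.1.2 ∨ y.1.2 + 3 ≤ x.1.2) ∧
    (∀ (x y : Vm m) (c : ℕ), mkQ m x = mkQ m y →
      Inc m x c → Inc m y c → x.1.1 = y.1.1) ∧
    (∀ (x y : Vm m) (c : ℕ), mkQ m x = mkQ m y →
      Inc m x c → Inc m y (c + 1) → x.1.1 = y.1.1) := by
  refine ⟨fun _ _ => index_far_of_glueRel hm, ?_, ?_⟩
  · exact fun _ _ c h hx hy => copy_eq_of_mkQ_eq_of_inc hm h hx hy c.le_succ c.le_succ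
  · exact fun _ _ c h hx hy => copy_eq_of_mkQ_eq_of_inc hm h hx hy le_rfl (by omega)
end
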